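/- arXiv:1607.06862 — 3 statements merged into one kernel-verified Lean document; each statement's English description precedes it below -/
import Mathlib

section
/- Let H be a Hilbert space, Y, Z reflexive Banach spaces, S : H → Y and T : H → Z bounded linear operators satisfying the orthogonality conditions S ∘ T† = 0 and T ∘ S† = 0. Suppose there is a Hilbert space H̃ with compact embedding j : H → H̃ and constant C > 0 with ‖h‖_H ≤ C(‖Sh‖_Y + ‖Th‖_Z + ‖j(h)‖_{H̃}) for all h ∈ H. If uₙ ⇀ ū and vₙ ⇀ v̄ weakly in H, {Suₙ} is pre-compact in Y, and {Tvₙ} is pre-compact in Z, then ⟨uₙ, vₙ⟩_H → ⟨ū, v̄⟩_H. -/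
open Filter
open scoped RealInnerProductSpace Topology

/-! Put `P = (ker S).starProjection` and `Q = (ker T).starProjection`. The orthogonality
hypotheses say `(ker S)ᗮ ≤ ker T` and `(ker T)ᗮ ≤ ker S`, so on the three sequences
`uₙ - P uₙ`, `vₙ - Q vₙ`, `Q P uₙ` the pair `(S, T)` acts as `(S, 0)`, `(0, T)`, `(0, 0)`.
Hence `S` and `T` converge strongly along each of them, and the coercive estimate (with `j`
turning weak into strong convergence) makes all three converge strongly. Since
`⟪u, v⟫ = ⟪u - P u, v⟫ + ⟪v - Q v, P u⟫ + ⟪Q P u, v⟫`, every term pairs a strongly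
convergent sequence with a weakly convergent one, and such inner products converge. -/

theorem IsCompact.tendsto_of_forall_dual_tendsto {𝕜 E ι : Type*} [RCLike 𝕜]
    [NormedAddCommGroup E] [NormedSpace 𝕜 E] {l : Filter ι} {f : ι → E} {y : E} {K : Set E}
    (hK : IsCompact K) (hmem : ∀ᶠ i in l, f i ∈ K)
    (hweak : ∀ φ : StrongDual 𝕜 E, Tendsto (fun i => φ (f i)) l (𝓝 (φ y))) :
    Tendsto f l (𝓝 y) := by
  refine hK.tendsto_nhds_of_unique_mapClusterPt hmem fun x _ hx => ?_
  refine sub_eq_zero.1 (SeparatingDual.eq_zero_of_forall_dual_eq_zero (R := 𝕜) fun φ => ?_)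
  have hφx : ClusterPt (φ x) (𝓝 (φ y)) :=
    ClusterPt.mono (hx.continuousAt_comp φ.continuous.continuousAt) (hweak φ)
  rw [map_sub, eq_of_nhds_neBot hφx, sub_self]

theorem orthogonal_ker_le_ker_of_comp_adjoint_eq_zero {𝕜 H Y Z : Type*} [RCLike 𝕜]
    [NormedAddCommGroup H] [InnerProductSpace 𝕜 H] [CompleteSpace H]
    [NormedAddCommGroup Y] [NormedSpace 𝕜 Y] [NormedAddCommGroup Z] [NormedSpace 𝕜 Z]
    (S : H →L[𝕜] Y) (T : H →L[𝕜] Z)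
    (hST : ∀ b : StrongDual 𝕜 Z, S ((InnerProductSpace.toDual 𝕜 H).symm (b.comp T)) = 0) :
    S.kerᗮ ≤ T.ker := fun h hh =>
  SeparatingDual.eq_zero_of_forall_dual_eq_zero (R := 𝕜) fun b => by
    simpa only [InnerProductSpace.toDual_symm_apply, ContinuousLinearMap.comp_apply,
      ContinuousLinearMap.coe_coe] using
      (Submodule.mem_orthogonal _ h).1 hh _ (LinearMap.mem_ker.2 (hST b))

theorem map_starProjection_of_orthogonal_le_ker {𝕜 H Y : Type*} [RCLike 𝕜]
    [NormedAddCommGroup H] [InnerProductSpace 𝕜 H] [NormedAddCommGroup Y] [NormedSpace 𝕜 Y]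
    {K : Submodule 𝕜 H} [K.HasOrthogonalProjection] (S : H →L[𝕜] Y)
    (hK : Kᗮ ≤ S.ker) (x : H) : S (K.starProjection x) = S x := by
  have hker := hK (K.sub_starProjection_mem_orthogonal x)
  rw [LinearMap.mem_ker, map_sub, sub_eq_zero] at hker
  exact hker.symm

section Weak

variable {H : Type*} [NormedAddCommGroup H] [InnerProductSpace ℝ H]

def WeakTendsto (u : ℕ → H) (x : H) : Prop :=
  ∀ w : H, Tendsto (fun n => ⟪u n, w⟫) atTop (𝓝 ⟪x, w⟫)

namespace WeakTendsto

variable {u v : ℕ → H} {x y : H}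

theorem sub (hu : WeakTendsto u x) (hv : WeakTendsto v y) :
    WeakTendsto (fun n => u n - v n) (x - y) := fun w => by
  simpa only [inner_sub_left] using (hu w).sub (hv w)

variable [CompleteSpace H]

theorem apply_dual (hu : WeakTendsto u x) (φ : StrongDual ℝ H) :
    Tendsto (fun n => φ (u n)) atTop (𝓝 (φ x)) := by
  simpa only [real_inner_comm ((InnerProductSpace.toDual ℝ H).symm φ),
    InnerProductSpace.toDual_symm_apply] using hu ((InnerProductSpace.toDual ℝ H).symm φ)

theorem map {G : Type*} [NormedAddCommGroup G] [InnerProductSpace ℝ G]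
    (hu : WeakTendsto u x) (L : H →L[ℝ] G) : WeakTendsto (fun n => L (u n)) (L x) := fun w => by
  simpa only [innerSL_apply_apply, ContinuousLinearMap.comp_apply, real_inner_comm w] using
    hu.apply_dual ((innerSL ℝ w).comp L)

theorem exists_norm_le (hu : WeakTendsto u x) : ∃ M, ∀ n, ‖u n‖ ≤ M := by
  have hpt (w : H) : ∃ c, ∀ n, ‖InnerProductSpace.toDual ℝ H (u n) w‖ ≤ c := by
    obtain ⟨c, hc⟩ := (hu w).norm.bddAbove_range
    exact ⟨c, fun n => hc (Set.mem_range_self n)⟩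
  obtain ⟨M, hM⟩ := banach_steinhaus hpt
  exact ⟨M, fun n => by simpa only [LinearIsometryEquiv.norm_map] using hM n⟩

theorem tendsto_map_of_mem_compact {E : Type*} [NormedAddCommGroup E] [NormedSpace ℝ E]
    (hu : WeakTendsto u x) (F : H →L[ℝ] E) {K : Set E} (hK : IsCompact K)
    (hmem : ∀ n, F (u n) ∈ K) : Tendsto (fun n => F (u n)) atTop (𝓝 (F x)) :=
  hK.tendsto_of_forall_dual_tendsto (Eventually.of_forall hmem) fun φ =>
    hu.apply_dual (φ.comp F)

theorem tendsto_map_of_isCompactOperator {E : Type*} [NormedAddCommGroup E] [NormedSpace ℝ E]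
    (hu : WeakTendsto u x) {j : H →L[ℝ] E} (hj : IsCompactOperator j) :
    Tendsto (fun n => j (u n)) atTop (𝓝 (j x)) := by
  obtain ⟨M, hM⟩ := hu.exists_norm_le
  obtain ⟨K, hK, hjK⟩ := hj.image_closedBall_subset_compact M
  exact hu.tendsto_map_of_mem_compact j hK fun n =>
    hjK (Set.mem_image_of_mem _ (mem_closedBall_zero_iff.2 (hM n)))

theorem tendsto_inner_left (hv : WeakTendsto v y) (hu : Tendsto u atTop (𝓝 x)) :
    Tendsto (fun n => ⟪u n, v n⟫) atTop (𝓝 ⟪x, y⟫) := by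
  obtain ⟨M, hM⟩ := hv.exists_norm_le
  have hsmall : Tendsto (fun n => ⟪u n - x, v n⟫) atTop (𝓝 0) := by
    have hux : Tendsto (fun n => ‖u n - x‖ * M) atTop (𝓝 0) := by
      simpa only [zero_mul] using (tendsto_iff_norm_sub_tendsto_zero.1 hu).mul_const M
    refine squeeze_zero_norm (fun n => ?_) hux
    exact (norm_inner_le_norm _ _).trans (mul_le_mul_of_nonneg_left (hM n) (norm_nonneg _))
  have hx : Tendsto (fun n => ⟪x, v n⟫) atTop (𝓝 ⟪x, y⟫) := by
    simpa only [real_inner_comm x] using hv x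
  simpa only [inner_sub_left, sub_add_cancel, zero_add] using hsmall.add hx

end WeakTendsto

theorem WeakTendsto.tendsto_of_norm_le {Y Z Ht : Type*}
    [CompleteSpace H] [NormedAddCommGroup Y] [NormedSpace ℝ Y] [NormedAddCommGroup Z]
    [NormedSpace ℝ Z] [NormedAddCommGroup Ht] [NormedSpace ℝ Ht]
    {S : H →L[ℝ] Y} {T : H →L[ℝ] Z} {j : H →L[ℝ] Ht} {C : ℝ} {u : ℕ → H} {x : H}
    (hu : WeakTendsto u x) (hj : IsCompactOperator j)
    (hest : ∀ h : H, ‖h‖ ≤ C * (‖S h‖ + ‖T h‖ + ‖j h‖))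
    (hS : Tendsto (fun n => S (u n)) atTop (𝓝 (S x)))
    (hT : Tendsto (fun n => T (u n)) atTop (𝓝 (T x))) : Tendsto u atTop (𝓝 x) := by
  have hj' := hu.tendsto_map_of_isCompactOperator hj
  rw [tendsto_iff_norm_sub_tendsto_zero] at hS hT hj' ⊢
  refine squeeze_zero (fun n => norm_nonneg _) (fun n => hest (u n - x)) ?_
  simpa only [map_sub, add_zero, mul_zero] using ((hS.add hT).add hj').const_mul C

end Weak

theorem stmt_7_general
    {H Y Z Ht : Type*}
    [NormedAddCommGroup H] [InnerProductSpace ℝ H] [CompleteSpace H]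
    [NormedAddCommGroup Y] [NormedSpace ℝ Y]
    [NormedAddCommGroup Z] [NormedSpace ℝ Z]
    [NormedAddCommGroup Ht] [InnerProductSpace ℝ Ht]
    (S : H →L[ℝ] Y) (T : H →L[ℝ] Z)
    -- (Op 1) orthogonality: S ∘ T† = 0 and T ∘ S† = 0
    (horth1 : ∀ b : Z →L[ℝ] ℝ, S ((InnerProductSpace.toDual ℝ H).symm (b.comp T)) = 0)
    (horth2 : ∀ a : Y →L[ℝ] ℝ, T ((InnerProductSpace.toDual ℝ H).symm (a.comp S)) = 0)
    -- (Op 2) the coercive estimate via a compact embedding j : H → H̃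
    (j : H →L[ℝ] Ht) (hjcpt : IsCompactOperator j)
    (C : ℝ)
    (hest : ∀ h : H, ‖h‖ ≤ C * (‖S h‖ + ‖T h‖ + ‖j h‖))
    -- (Seq 1) weak convergence of the two sequences
    (u v : ℕ → H) (ub vb : H)
    (hu : ∀ w : H, Tendsto (fun n => ⟪u n, w⟫) atTop (𝓝 ⟪ub, w⟫))
    (hv : ∀ w : H, Tendsto (fun n => ⟪v n, w⟫) atTop (𝓝 ⟪vb, w⟫))
    -- (Seq 2) pre-compactness of {S uₙ} and {T vₙ}
    (KY : Set Y) (hKY : IsCompact KY) (hSu : ∀ n, S (u n) ∈ KY)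
    (KZ : Set Z) (hKZ : IsCompact KZ) (hTv : ∀ n, T (v n) ∈ KZ) :
    Tendsto (fun n => ⟪u n, v n⟫) atTop (𝓝 ⟪ub, vb⟫) := by
  have hu' : WeakTendsto u ub := hu
  have hv' : WeakTendsto v vb := hv
  have hST := orthogonal_ker_le_ker_of_comp_adjoint_eq_zero S T horth1
  have hTS := orthogonal_ker_le_ker_of_comp_adjoint_eq_zero T S horth2
  set PS := S.ker.starProjection
  set PT := T.ker.starProjection
  have hSPS (x : H) : S (PS x) = 0 := S.ker.starProjection_apply_mem x
  have hTPT (x : H) : T (PT x) = 0 := T.ker.starProjection_apply_mem x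
  have hSPT (x : H) : S (PT x) = S x := map_starProjection_of_orthogonal_le_ker S hTS x
  have hTPS (x : H) : T (PS x) = T x := map_starProjection_of_orthogonal_le_ker T hST x
  have hstrong {w : ℕ → H} {x : H} (hw : WeakTendsto w x) := hw.tendsto_of_norm_le hjcpt hest
  have hu₁ : Tendsto (fun n => u n - PS (u n)) atTop (𝓝 (ub - PS ub)) :=
    hstrong (hu'.sub (hu'.map PS))
      (by simpa only [map_sub, hSPS, sub_zero] using hu'.tendsto_map_of_mem_compact S hKY hSu)
      (by simp only [map_sub, hTPS, sub_self, tendsto_const_nhds])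
  have hv₁ : Tendsto (fun n => v n - PT (v n)) atTop (𝓝 (vb - PT vb)) :=
    hstrong (hv'.sub (hv'.map PT))
      (by simp only [map_sub, hSPT, sub_self, tendsto_const_nhds])
      (by simpa only [map_sub, hTPT, sub_zero] using hv'.tendsto_map_of_mem_compact T hKZ hTv)
  have hu₀ : Tendsto (fun n => PT (PS (u n))) atTop (𝓝 (PT (PS ub))) :=
    hstrong ((hu'.map PS).map PT) (by simp only [hSPT, hSPS, tendsto_const_nhds])
      (by simp only [hTPT, tendsto_const_nhds])
  have hsplit (x y : H) :
      ⟪x, y⟫ = ⟪x - PS x, y⟫ + ⟪y - PT y, PS x⟫ + ⟪PT (PS x), y⟫ := by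
    rw [Submodule.inner_starProjection_left_eq_right, inner_sub_left, inner_sub_left,
      real_inner_comm (PS x) y, real_inner_comm (PS x) (PT y)]
    ring
  rw [hsplit ub vb]
  refine Tendsto.congr (fun n => (hsplit (u n) (v n)).symm) ?_
  exact ((hv'.tendsto_inner_left hu₁).add ((hu'.map PS).tendsto_inner_left hv₁)).add
    (hv'.tendsto_inner_left hu₀)

/-- (General compensated compactness theorem on Banach spaces.)
Let `H` be a Hilbert space, `Y`, `Z` reflexive Banach spaces, and `S : H → Y`, `T : H → Z`
bounded linear operators with `S ∘ T† = 0` and `T ∘ S† = 0` (adjoints via the Riesz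
identification `H ≅ H*`).  Assume there are a Hilbert space `H̃`, a compact embedding
`j : H → H̃`, and `C > 0` with `‖h‖_H ≤ C (‖S h‖ + ‖T h‖ + ‖j h‖)` for all `h`.
If `uₙ ⇀ ū`, `vₙ ⇀ v̄` weakly in `H`, `{S uₙ}` is pre-compact in `Y` and `{T vₙ}` is
pre-compact in `Z`, then `⟨uₙ, vₙ⟩_H → ⟨ū, v̄⟩_H`. -/
theorem stmt_7
    {H Y Z Ht : Type*}
    [NormedAddCommGroup H] [InnerProductSpace ℝ H] [CompleteSpace H]
    [NormedAddCommGroup Y] [NormedSpace ℝ Y] [CompleteSpace Y]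
    [NormedAddCommGroup Z] [NormedSpace ℝ Z] [CompleteSpace Z]
    [NormedAddCommGroup Ht] [InnerProductSpace ℝ Ht] [CompleteSpace Ht]
    (hYrefl : Function.Bijective (NormedSpace.inclusionInDoubleDual ℝ Y))
    (hZrefl : Function.Bijective (NormedSpace.inclusionInDoubleDual ℝ Z))
    (S : H →L[ℝ] Y) (T : H →L[ℝ] Z)
    -- (Op 1) orthogonality: S ∘ T† = 0 and T ∘ S† = 0
    (horth1 : ∀ b : Z →L[ℝ] ℝ, S ((InnerProductSpace.toDual ℝ H).symm (b.comp T)) = 0)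
    (horth2 : ∀ a : Y →L[ℝ] ℝ, T ((InnerProductSpace.toDual ℝ H).symm (a.comp S)) = 0)
    -- (Op 2) the coercive estimate via a compact embedding j : H → H̃
    (j : H →L[ℝ] Ht) (hjinj : Function.Injective j) (hjcpt : IsCompactOperator j)
    (C : ℝ) (hC : 0 < C)
    (hest : ∀ h : H, ‖h‖ ≤ C * (‖S h‖ + ‖T h‖ + ‖j h‖))
    -- (Seq 1) weak convergence of the two sequences
    (u v : ℕ → H) (ub vb : H)
    (hu : ∀ w : H, Tendsto (fun n => ⟪u n, w⟫) atTop (𝓝 ⟪ub, w⟫))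
    (hv : ∀ w : H, Tendsto (fun n => ⟪v n, w⟫) atTop (𝓝 ⟪vb, w⟫))
    -- (Seq 2) pre-compactness of {S uₙ} and {T vₙ}
    (KY : Set Y) (hKY : IsCompact KY) (hSu : ∀ n, S (u n) ∈ KY)
    (KZ : Set Z) (hKZ : IsCompact KZ) (hTv : ∀ n, T (v n) ∈ KZ) :
    Tendsto (fun n => ⟪u n, v n⟫) atTop (𝓝 ⟪ub, vb⟫) :=
  stmt_7_general S T horth1 horth2 j hjcpt C hest u v ub vb hu hv KY hKY hSu KZ hKZ hTv
end

section
/- On the open cube Ω = (0,1)³ ⊂ ℝ³, define vector fields uᵐ(x) = (√m · Σ_{j=1}^{m} χ_{[j/m, j/m + 1/m²]}(x₁), 0, 0) for integers m ≥ 1. Then uᵐ ⇀ 0 weakly in L²(Ω; ℝ³) as m → ∞, but ∫_Ω |uᵐ(x)|² dx → 1 as m → ∞. In particular, ⟨uᵐ, uᵐ⟩_{L²} does not converge to ⟨0, 0⟩ = 0. -/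
open Filter MeasureTheory
open scoped RealInnerProductSpace Topology

/-- The one-dimensional profile `√m · Σ_{j=1}^m χ_{[j/m, j/m + 1/m²]}` of the
"Fakir's carpet" vector fields. -/
noncomputable def fakirProfile (m : ℕ) (t : ℝ) : ℝ :=
  Real.sqrt m * ∑ j ∈ Finset.Icc 1 m,
    Set.indicator (Set.Icc ((j : ℝ) / m) ((j : ℝ) / m + 1 / (m : ℝ) ^ 2)) (fun _ => (1 : ℝ)) t

/-- The open unit cube `Ω = (0,1)³ ⊆ ℝ³`. -/
def unitCube : Set (EuclideanSpace ℝ (Fin 3)) := {x | ∀ i, x i ∈ Set.Ioo (0 : ℝ) 1}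

/-- The "Fakir's carpet" vector fields `uᵐ(x) = (√m Σ_j χ_{[j/m, j/m+1/m²]}(x₁), 0, 0)`. -/
noncomputable def fakirField (m : ℕ) (x : EuclideanSpace ℝ (Fin 3)) :
    EuclideanSpace ℝ (Fin 3) :=
  EuclideanSpace.single (0 : Fin 3) (fakirProfile m (x 0))

/-!
The intervals `[j/m, j/m + 1/m²]` are disjoint, so `uᵐ` is the constant `√m e₁` on the slab
`{x₁ ∈ ⋃ⱼ [j/m, j/m + 1/m²]}` and vanishes elsewhere. The `m - 1` intervals with `j < m` lie in
`(0, 1)` and the last one misses it, so `∫_Ω |uᵐ|² = m · (m - 1)/m² → 1`, while the slab has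
measure at most `1/m`. By Cauchy–Schwarz, `|∫_Ω uᵐ · g| ≤ ‖uᵐ‖₂ · ‖g‖_{L²(slab)}`, and the second
factor tends to `0` by absolute continuity of the integral of `|g|²`.
-/

open Set

theorem abs_integral_mul_le_sqrt_mul_sqrt {α : Type*} [MeasurableSpace α] {μ : Measure α}
    {f g : α → ℝ} (hf : MemLp f 2 μ) (hg : MemLp g 2 μ) :
    |∫ x, f x * g x ∂μ| ≤ √(∫ x, f x ^ 2 ∂μ) * √(∫ x, g x ^ 2 ∂μ) := by
  have h2 : ENNReal.ofReal 2 = 2 := by norm_num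
  have holder := integral_mul_norm_le_Lp_mul_Lq Real.HolderConjugate.two_two
    (h2 ▸ hf) (h2 ▸ hg)
  simp only [Real.norm_eq_abs, Real.rpow_two, sq_abs, ← Real.sqrt_eq_rpow] at holder
  calc |∫ x, f x * g x ∂μ| ≤ ∫ x, |f x| * |g x| ∂μ := by
        simpa only [abs_mul] using abs_integral_le_integral_abs (f := fun x => f x * g x)
    _ ≤ _ := holder

theorem tendsto_integral_mul_of_tendsto_measure_support {α ι : Type*} [MeasurableSpace α]
    {μ : Measure α} {l : Filter ι} {f : ι → α → ℝ} {g : α → ℝ} {S : ι → Set α} {C : ℝ}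
    (hS : ∀ n, MeasurableSet (S n)) (hμS : Tendsto (fun n => μ (S n)) l (𝓝 0))
    (hf : ∀ n, MemLp (f n) 2 μ) (hfS : ∀ n, ∀ x ∉ S n, f n x = 0)
    (hC : ∀ᶠ n in l, ∫ x, f n x ^ 2 ∂μ ≤ C) (hg : MemLp g 2 μ) :
    Tendsto (fun n => ∫ x, f n x * g x ∂μ) l (𝓝 0) := by
  have hfg : ∀ n, ∫ x, f n x * g x ∂μ = ∫ x, f n x * (S n).indicator g x ∂μ := by
    refine fun n => integral_congr_ae (Eventually.of_forall fun x => ?_)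
    by_cases hx : x ∈ S n <;> simp [hx, hfS n x]
  have hgS : Tendsto (fun n => ∫ x in S n, g x ^ 2 ∂μ) l (𝓝 0) :=
    hg.integrable_sq.tendsto_setIntegral_nhds_zero hμS
  have hbound : Tendsto (fun n => √C * √(∫ x in S n, g x ^ 2 ∂μ)) l (𝓝 0) := by
    simpa using (Real.continuous_sqrt.tendsto 0 |>.comp hgS).const_mul √C
  refine squeeze_zero_norm' ?_ hbound
  filter_upwards [hC] with n hn
  rw [Real.norm_eq_abs, hfg]
  calc |∫ x, f n x * (S n).indicator g x ∂μ|
      ≤ √(∫ x, f n x ^ 2 ∂μ) * √(∫ x, (S n).indicator g x ^ 2 ∂μ) :=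
        abs_integral_mul_le_sqrt_mul_sqrt (hf n) (hg.indicator (hS n))
    _ ≤ √C * √(∫ x in S n, g x ^ 2 ∂μ) := by
        have hind : ∀ x, (S n).indicator g x ^ 2 = (S n).indicator (fun x => g x ^ 2) x := by
          intro x; by_cases hx : x ∈ S n <;> simp [hx]
        simp_rw [hind, integral_indicator (hS n)]
        gcongr

lemma unitCube_eq_preimage :
    unitCube = WithLp.ofLp ⁻¹' univ.pi fun _ : Fin 3 => Ioo (0 : ℝ) 1 := by
  ext x; simp [unitCube]

theorem measurePreserving_eval_unitCube (i : Fin 3) :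
    MeasurePreserving (fun x : EuclideanSpace ℝ (Fin 3) => x i) (volume.restrict unitCube)
      (volume.restrict (Ioo 0 1)) := by
  have : IsProbabilityMeasure (volume.restrict (Ioo (0 : ℝ) 1)) := ⟨by simp⟩
  have hpi : MeasurePreserving (@WithLp.ofLp 2 (Fin 3 → ℝ)) (volume.restrict unitCube)
      (Measure.pi fun _ => volume.restrict (Ioo (0 : ℝ) 1)) := by
    rw [unitCube_eq_preimage, ← Measure.restrict_pi_pi, ← volume_pi]
    exact (PiLp.volume_preserving_ofLp _).restrict_preimage
      (MeasurableSet.univ_pi fun _ => measurableSet_Ioo)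
  exact (measurePreserving_eval _ i).comp hpi

def fakirInterval (m j : ℕ) : Set ℝ := Icc ((j : ℝ) / m) ((j : ℝ) / m + 1 / (m : ℝ) ^ 2)

def fakirSupport (m : ℕ) : Set ℝ := ⋃ j ∈ Finset.Icc 1 m, fakirInterval m j

lemma fakirInterval_subset_Ico {m : ℕ} (hm : 2 ≤ m) (j : ℕ) :
    fakirInterval m j ⊆ Ico ((j : ℝ) / m) ((j + 1) / m) := by
  have hm' : (2 : ℝ) ≤ m := by exact_mod_cast hm
  refine Icc_subset_Ico_right ?_
  rw [add_div, add_lt_add_iff_left, one_div_lt_one_div (by positivity) (by positivity)]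
  nlinarith

lemma disjoint_fakirInterval {m j k : ℕ} (hm : 2 ≤ m) (hjk : j < k) :
    Disjoint (fakirInterval m j) (fakirInterval m k) := by
  refine disjoint_left.mpr fun t htj htk => (fakirInterval_subset_Ico hm j htj).2.not_ge ?_
  calc ((j : ℝ) + 1) / m ≤ k / m := by gcongr; exact_mod_cast hjk
    _ ≤ t := htk.1

lemma pairwiseDisjoint_fakirInterval (m : ℕ) :
    (Finset.Icc 1 m : Set ℕ).PairwiseDisjoint (fakirInterval m) := by
  intro j hj k hk hjk
  simp only [Finset.coe_Icc, mem_Icc] at hj hk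
  rcases hjk.lt_or_gt with h | h
  · exact disjoint_fakirInterval (by omega) h
  · exact (disjoint_fakirInterval (by omega) h).symm

lemma fakirProfile_eq_indicator (m : ℕ) :
    fakirProfile m = (fakirSupport m).indicator fun _ => √m := by
  ext t
  rw [fakirSupport, Finset.indicator_biUnion _ _ (pairwiseDisjoint_fakirInterval m), fakirProfile,
    Finset.mul_sum]
  simp only [fakirInterval, indicator_apply, mul_ite, mul_one, mul_zero]

lemma measurableSet_fakirSupport (m : ℕ) : MeasurableSet (fakirSupport m) :=
  Finset.measurableSet_biUnion _ fun _ _ => measurableSet_Icc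

lemma fakirInterval_subset_Ioo {m j : ℕ} (hj : 1 ≤ j) (hjm : j < m) :
    fakirInterval m j ⊆ Ioo 0 1 := by
  have hm : (0 : ℝ) < m := by exact_mod_cast (by omega : 0 < m)
  have hj' : (1 : ℝ) ≤ j := by exact_mod_cast hj
  have hjm' : (j : ℝ) + 1 ≤ m := by exact_mod_cast hjm
  intro t ht
  obtain ⟨hjt, htj⟩ := fakirInterval_subset_Ico (by omega) j ht
  exact ⟨(by positivity : (0 : ℝ) < j / m).trans_le hjt, htj.trans_le ((div_le_one hm).2 hjm')⟩

lemma fakirSupport_inter_Ioo (m : ℕ) :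
    fakirSupport m ∩ Ioo 0 1 = ⋃ j ∈ Finset.Ico 1 m, fakirInterval m j := by
  ext t
  simp only [fakirSupport, mem_inter_iff, mem_iUnion, Finset.mem_Icc, Finset.mem_Ico, exists_prop]
  constructor
  · rintro ⟨⟨j, ⟨hj1, hjm⟩, ht⟩, ht01⟩
    refine ⟨j, ⟨hj1, hjm.lt_of_ne ?_⟩, ht⟩
    rintro rfl
    have : (j : ℝ) / j = 1 := div_self (by positivity)
    exact ht01.2.not_ge (this ▸ ht.1)
  · rintro ⟨j, ⟨hj1, hjm⟩, ht⟩
    exact ⟨⟨j, ⟨hj1, hjm.le⟩, ht⟩, fakirInterval_subset_Ioo hj1 hjm ht⟩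

lemma volume_real_fakirInterval (m j : ℕ) : volume.real (fakirInterval m j) = 1 / m ^ 2 := by
  rw [fakirInterval, Real.volume_real_Icc_of_le (le_add_of_nonneg_right (by positivity)),
    add_sub_cancel_left]

lemma volume_real_fakirSupport_inter_Ioo {m : ℕ} (hm : 1 ≤ m) :
    volume.real (fakirSupport m ∩ Ioo 0 1) = ((m : ℝ) - 1) / m ^ 2 := by
  rw [fakirSupport_inter_Ioo, measureReal_biUnion_finset
    ((pairwiseDisjoint_fakirInterval m).subset (Finset.coe_subset.2 Finset.Ico_subset_Icc_self))
    (fun _ _ => measurableSet_Icc) fun _ _ => measure_Icc_lt_top.ne]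
  simp only [volume_real_fakirInterval, Finset.sum_const, Nat.card_Ico, nsmul_eq_mul]
  rw [Nat.cast_sub hm, Nat.cast_one, mul_one_div]

lemma fakirProfile_sq (m : ℕ) (t : ℝ) :
    fakirProfile m t ^ 2 = (fakirSupport m).indicator (fun _ => (m : ℝ)) t := by
  by_cases ht : t ∈ fakirSupport m <;> simp [fakirProfile_eq_indicator, ht]

lemma integral_fakirProfile_sq {m : ℕ} (hm : 1 ≤ m) :
    ∫ t in Ioo 0 1, fakirProfile m t ^ 2 = 1 - 1 / m := by
  have hm' : (m : ℝ) ≠ 0 := by positivity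
  simp_rw [fakirProfile_sq]
  rw [integral_indicator_const _ (measurableSet_fakirSupport m),
    measureReal_restrict_apply (measurableSet_fakirSupport m),
    volume_real_fakirSupport_inter_Ioo hm, smul_eq_mul]
  field_simp

lemma tendsto_volume_fakirSupport :
    Tendsto (fun m => volume.restrict (Ioo (0 : ℝ) 1) (fakirSupport m)) atTop (𝓝 0) := by
  have h := tendsto_one_div_atTop_nhds_zero_nat (𝕜 := ℝ)
  have hreal : Tendsto (fun m : ℕ => ((m : ℝ) - 1) / m ^ 2) atTop (𝓝 0) := by
    have h' : Tendsto (fun m : ℕ => 1 / (m : ℝ) - (1 / m) ^ 2) atTop (𝓝 0) := by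
      simpa using h.sub (h.pow 2)
    refine h'.congr fun m => ?_
    rcases eq_or_ne (m : ℝ) 0 with hm | hm
    · simp [hm]
    · field_simp
  refine (ENNReal.ofReal_zero ▸ ENNReal.tendsto_ofReal hreal).congr' ?_
  filter_upwards [eventually_ge_atTop 1] with m hm
  rw [← volume_real_fakirSupport_inter_Ioo hm,
    ofReal_measureReal (measure_mono inter_subset_right |>.trans_lt measure_Ioo_lt_top).ne,
    Measure.restrict_apply (measurableSet_fakirSupport m)]

lemma measurable_fakirProfile (m : ℕ) : Measurable (fakirProfile m) := by
  rw [fakirProfile_eq_indicator]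
  exact measurable_const.indicator (measurableSet_fakirSupport m)

lemma memLp_fakirProfile (m : ℕ) : MemLp (fakirProfile m) 2 (volume.restrict (Ioo 0 1)) := by
  rw [fakirProfile_eq_indicator]
  exact memLp_indicator_const 2 (measurableSet_fakirSupport m) _ (Or.inr (measure_ne_top _ _))

lemma integral_unitCube_fakirProfile_sq {m : ℕ} (hm : 1 ≤ m) :
    ∫ x in unitCube, fakirProfile m (x 0) ^ 2 = 1 - 1 / m := by
  have e := measurePreserving_eval_unitCube 0
  rw [← integral_fakirProfile_sq hm, ← e.map_eq, integral_map e.aemeasurable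
    ((measurable_fakirProfile m).pow_const 2).aestronglyMeasurable]

/-- On `Ω = (0,1)³`, the Fakir's carpet fields `uᵐ` converge weakly to `0`
in `L²(Ω; ℝ³)` as `m → ∞`, yet `∫_Ω |uᵐ|² dx → 1`; in particular `⟨uᵐ, uᵐ⟩_{L²}` does not
converge to `⟨0, 0⟩ = 0`. -/
theorem stmt_11 :
    (∀ g : EuclideanSpace ℝ (Fin 3) → EuclideanSpace ℝ (Fin 3),
        MemLp g 2 (volume.restrict unitCube) →
        Tendsto (fun m : ℕ => ∫ x in unitCube, ⟪fakirField m x, g x⟫) atTop (𝓝 0))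
      ∧ Tendsto (fun m : ℕ => ∫ x in unitCube, ‖fakirField m x‖ ^ 2) atTop (𝓝 1)
      ∧ ¬ Tendsto (fun m : ℕ => ∫ x in unitCube, ⟪fakirField m x, fakirField m x⟫)
          atTop (𝓝 0) := by
  have e := measurePreserving_eval_unitCube 0
  have hnorm : Tendsto (fun m : ℕ => ∫ x in unitCube, ‖fakirField m x‖ ^ 2) atTop (𝓝 1) := by
    have h : Tendsto (fun m : ℕ => 1 - 1 / (m : ℝ)) atTop (𝓝 1) := by
      simpa using tendsto_const_nhds.sub (tendsto_one_div_atTop_nhds_zero_nat (𝕜 := ℝ))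
    refine h.congr' ?_
    filter_upwards [eventually_ge_atTop 1] with m hm
    simp only [fakirField, PiLp.norm_single, Real.norm_eq_abs, sq_abs]
    exact (integral_unitCube_fakirProfile_sq hm).symm
  refine ⟨fun g hg => ?_, hnorm, fun h => ?_⟩
  · simp only [fakirField, EuclideanSpace.inner_single_left, starRingEnd_apply,
      star_trivial]
    refine tendsto_integral_mul_of_tendsto_measure_support (C := 1)
      (S := fun m => (· 0) ⁻¹' fakirSupport m)
      (fun m => e.measurable (measurableSet_fakirSupport m))
      (by simpa only [e.measure_preimage (measurableSet_fakirSupport _).nullMeasurableSet]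
        using tendsto_volume_fakirSupport)
      (fun m => (memLp_fakirProfile m).comp_measurePreserving e)
      (fun m x hx => by
        rw [fakirProfile_eq_indicator]; exact indicator_of_notMem (s := fakirSupport m) hx _)
      ?_ ((PiLp.proj (𝕜 := ℝ) 2 (fun _ : Fin 3 => ℝ) 0).comp_memLp' hg)
    filter_upwards [eventually_ge_atTop 1] with m hm
    rw [integral_unitCube_fakirProfile_sq hm]
    exact sub_le_self 1 (by positivity)
  · simp only [real_inner_self_eq_norm_sq] at h
    exact zero_ne_one (tendsto_nhds_unique h hnorm)
end

section
/- For the vector fields uᵐ of the Fakir's carpet example on Ω = (0,1)³, for every test function ψ ∈ W^{1,∞}₀(Ω) one has |∫_Ω div(uᵐ)(x) ψ(x) dx| = |∫_Ω uᵐ(x)·∇ψ(x) dx| ≤ ‖ψ‖_{W^{1,∞}} / √m, and hence div(uᵐ) → 0 in the sense of distributions. -/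
open Filter MeasureTheory
open scoped Topology

/-! The profile is a sum of `m` bumps of height `√m` and width `1/m²`, so its total mass is
`m · √m / m² = 1/√m`. The pairing `∫_Ω fakirProfile m (x₁) ∂₁ψ` is therefore bounded by
`‖∂₁ψ‖_∞ · ∫_Ω fakirProfile m (x₁) dx ≤ ‖∇ψ‖_∞ / √m`, the integral over the cube reducing to
a one-dimensional one because the coordinate projection pushes the uniform measure on the
cube forward to the uniform measure on `(0,1)`. -/

open Set

lemma fakirProfile_nonneg (m : ℕ) (t : ℝ) : 0 ≤ fakirProfile m t :=
  mul_nonneg (Real.sqrt_nonneg _) <| Finset.sum_nonneg fun _ _ =>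
    indicator_nonneg (fun _ _ => zero_le_one) _

lemma integrable_indicator_Icc_one (a b : ℝ) :
    Integrable ((Icc a b).indicator fun _ => (1 : ℝ)) :=
  (integrable_indicator_iff measurableSet_Icc).2 (integrableOn_const measure_Icc_lt_top.ne)

lemma integrable_fakirProfile (m : ℕ) : Integrable (fakirProfile m) :=
  (integrable_finsetSum _ fun _ _ => integrable_indicator_Icc_one _ _).const_mul _

lemma integral_fakirProfile (m : ℕ) : ∫ t, fakirProfile m t = 1 / Real.sqrt m := by
  have hbump : ∀ j : ℕ, ∫ t, (Icc ((j : ℝ) / m) ((j : ℝ) / m + 1 / (m : ℝ) ^ 2)).indicator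
      (fun _ => (1 : ℝ)) t = 1 / (m : ℝ) ^ 2 := fun j => by
    rw [← Pi.one_def, integral_indicator_one measurableSet_Icc, Real.volume_real_Icc]
    simp
  simp only [fakirProfile]
  rw [integral_const_mul, integral_finsetSum _ fun _ _ => integrable_indicator_Icc_one _ _]
  simp only [hbump, Finset.sum_const, Nat.card_Icc, add_tsub_cancel_right, nsmul_eq_mul]
  rcases Nat.eq_zero_or_pos m with rfl | hm
  · simp
  have hs : Real.sqrt m ^ 2 = m := Real.sq_sqrt (Nat.cast_nonneg m)
  have hsqrt_pos : (0 : ℝ) < Real.sqrt m := Real.sqrt_pos.2 (by exact_mod_cast hm)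
  field_simp
  exact hs

instance : IsProbabilityMeasure (volume.restrict (Ioo (0 : ℝ) 1)) :=
  ⟨by simp⟩

lemma measurePreserving_apply_restrict_cube {ι : Type*} [Fintype ι] (i : ι) :
    MeasurePreserving (fun x : EuclideanSpace ℝ ι => x i)
      (volume.restrict {x | ∀ j, x j ∈ Ioo (0 : ℝ) 1}) (volume.restrict (Ioo 0 1)) := by
  have hpre : (MeasurableEquiv.toLp 2 (ι → ℝ)).symm ⁻¹' univ.pi (fun _ => Ioo (0 : ℝ) 1) =
      {x | ∀ j, x j ∈ Ioo 0 1} := by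
    ext x
    simp
  have hcube := (EuclideanSpace.volume_preserving_symm_measurableEquiv_toLp ι).restrict_preimage_emb
    (MeasurableEquiv.measurableEmbedding _) (univ.pi fun _ => Ioo (0 : ℝ) 1)
  rw [hpre, volume_pi, Measure.restrict_pi_pi] at hcube
  exact (measurePreserving_eval _ i).comp hcube

lemma measurePreserving_apply_zero_restrict_unitCube :
    MeasurePreserving (fun x : EuclideanSpace ℝ (Fin 3) => x 0)
      (volume.restrict unitCube) (volume.restrict (Ioo 0 1)) :=
  measurePreserving_apply_restrict_cube 0

lemma integrableOn_unitCube_fakirProfile (m : ℕ) :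
    IntegrableOn (fun x => fakirProfile m (x 0)) unitCube :=
  (measurePreserving_apply_zero_restrict_unitCube.integrable_comp
    (integrable_fakirProfile m).aestronglyMeasurable.restrict).2
    (integrable_fakirProfile m).integrableOn

lemma setIntegral_unitCube_fakirProfile_le (m : ℕ) :
    ∫ x in unitCube, fakirProfile m (x 0) ≤ 1 / Real.sqrt m := by
  have hproj := measurePreserving_apply_zero_restrict_unitCube
  rw [← integral_fakirProfile, ← integral_map hproj.measurable.aemeasurable
    (hproj.map_eq ▸ (integrable_fakirProfile m).aestronglyMeasurable.restrict), hproj.map_eq]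
  exact setIntegral_le_integral (integrable_fakirProfile m)
    (Eventually.of_forall (fakirProfile_nonneg m))

lemma abs_setIntegral_fakirProfile_mul_le {g : EuclideanSpace ℝ (Fin 3) → ℝ} {K : ℝ}
    (hg : ∀ x, |g x| ≤ K) (m : ℕ) :
    |∫ x in unitCube, fakirProfile m (x 0) * g x| ≤ K / Real.sqrt m := by
  have hK : 0 ≤ K := (abs_nonneg _).trans (hg 0)
  have hpointwise : ∀ x, ‖fakirProfile m (x 0) * g x‖ ≤ K * fakirProfile m (x 0) := fun x => by
    rw [Real.norm_eq_abs, abs_mul, abs_of_nonneg (fakirProfile_nonneg m _), mul_comm]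
    exact mul_le_mul_of_nonneg_right (hg x) (fakirProfile_nonneg m _)
  calc |∫ x in unitCube, fakirProfile m (x 0) * g x|
      ≤ ∫ x in unitCube, K * fakirProfile m (x 0) :=
        norm_integral_le_of_norm_le ((integrableOn_unitCube_fakirProfile m).const_mul K)
          (Eventually.of_forall hpointwise)
    _ = K * ∫ x in unitCube, fakirProfile m (x 0) := integral_const_mul _ _
    _ ≤ K * (1 / Real.sqrt m) :=
        mul_le_mul_of_nonneg_left (setIntegral_unitCube_fakirProfile_le m) hK
    _ = K / Real.sqrt m := mul_one_div _ _

theorem stmt_12_general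
    (ψ : EuclideanSpace ℝ (Fin 3) → ℝ)
    (K : ℝ)
    (hK1 : ∀ x, ‖fderiv ℝ ψ x‖ ≤ K) :
    (∀ m : ℕ, 1 ≤ m →
        |∫ x in unitCube, fakirProfile m (x 0) *
            fderiv ℝ ψ x (EuclideanSpace.single (0 : Fin 3) (1 : ℝ))|
          ≤ K / Real.sqrt m)
      ∧ Tendsto (fun m : ℕ => ∫ x in unitCube, fakirProfile m (x 0) *
            fderiv ℝ ψ x (EuclideanSpace.single (0 : Fin 3) (1 : ℝ)))
          atTop (𝓝 0) := by
  have hbound : ∀ m : ℕ, |∫ x in unitCube, fakirProfile m (x 0) *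
      fderiv ℝ ψ x (EuclideanSpace.single (0 : Fin 3) (1 : ℝ))| ≤ K / Real.sqrt m :=
    abs_setIntegral_fakirProfile_mul_le fun x => by
      simpa using
        (fderiv ℝ ψ x).le_of_opNorm_le (hK1 x) (EuclideanSpace.single (0 : Fin 3) (1 : ℝ))
  refine ⟨fun m _ => hbound m, squeeze_zero_norm hbound ?_⟩
  exact tendsto_const_nhds.div_atTop (Real.tendsto_sqrt_atTop.comp tendsto_natCast_atTop_atTop)

/-- For the Fakir's carpet fields `uᵐ` on `Ω = (0,1)³` and any test
function `ψ ∈ W^{1,∞}₀(Ω)` (Lipschitz-differentiable, supported in `Ω`, with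
`|ψ| ≤ K` and `‖∇ψ‖ ≤ K`), the distributional pairing of `div uᵐ` with `ψ`, which equals
`−∫_Ω uᵐ·∇ψ = −∫_Ω (fakirProfile m x₁) ∂₁ψ(x) dx`, satisfies
`|∫_Ω uᵐ·∇ψ| ≤ K/√m` for all `m ≥ 1`; hence `div uᵐ → 0` in the sense of distributions. -/
theorem stmt_12
    (ψ : EuclideanSpace ℝ (Fin 3) → ℝ)
    (hψdiff : Differentiable ℝ ψ)
    (hψsupp : tsupport ψ ⊆ unitCube)
    (K : ℝ)
    (hK0 : ∀ x, |ψ x| ≤ K)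
    (hK1 : ∀ x, ‖fderiv ℝ ψ x‖ ≤ K) :
    (∀ m : ℕ, 1 ≤ m →
        |∫ x in unitCube, fakirProfile m (x 0) *
            fderiv ℝ ψ x (EuclideanSpace.single (0 : Fin 3) (1 : ℝ))|
          ≤ K / Real.sqrt m)
      ∧ Tendsto (fun m : ℕ => ∫ x in unitCube, fakirProfile m (x 0) *
            fderiv ℝ ψ x (EuclideanSpace.single (0 : Fin 3) (1 : ℝ)))
          atTop (𝓝 0) :=
  stmt_12_general ψ K hK1
end
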